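/- A convolution as attention: if for each query q the attention weights φ(A^{(h)}_q)_k equal the indicator 1[k - q = Δ_h] for a fixed shift Δ_h per head h, then the multi-head attention output at q, Concat_h(Σ_k φ(A^{(h)}_q)_k X_k) W_proj, equals Σ_h X_{q+Δ_h} W^{(h)}_proj, which is exactly a convolutional layer with kernel offsets {Δ_h} and per-offset weight matrices W^{(h)}_proj. -/
import Mathlib


/-- If each head's attention weights are the indicator of the shift `Δ h`, then
the multi-head attention output at query `q` equals the convolutional layer
`∑ h, X (q + Δ h) * W h`. -/
theorem attention_as_convolution (Cin Cout m : ℕ) (G : Finset (ℤ × ℤ))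
    (X : ℤ × ℤ → Matrix (Fin 1) (Fin Cin) ℝ)
    (Δ : Fin m → ℤ × ℤ) (q : ℤ × ℤ) (hq : ∀ h, q + Δ h ∈ G)
    (φ : Fin m → ℤ × ℤ → ℝ)
    (hφ : ∀ h, ∀ k ∈ G, φ h k = if k - q = Δ h then 1 else 0)
    (Wproj : Fin m → Matrix (Fin Cin) (Fin Cout) ℝ) :
    ∑ h, (∑ k ∈ G, φ h k • X k) * Wproj h =
      ∑ h, X (q + Δ h) * Wproj h := by
  refine Finset.sum_congr rfl fun h _ => ?_
  congr 1
  rw [Finset.sum_eq_single (q + Δ h)]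
  · rw [hφ h _ (hq h)]
    simp
  · intro k hk hne
    rw [hφ h k hk, if_neg, zero_smul]
    intro hkq
    apply hne
    rw [← hkq]; ring
  · intro hmem
    exact absurd (hq h) hmem
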